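/- arXiv:1108.5104 — 2 statements merged into one kernel-verified Lean document; each statement's English description precedes it below -/
import Mathlib

section
/- (Johnson bound, second form) For all positive integers n, d, w with w < n, A(n,d,w) ≤ ⌊(n/(n−w)) · A(n−1, d, w)⌋. -/
/-- The number of ones of a binary vector. -/
def wtOnes {n : ℕ} (u : Fin n → ZMod 2) : ℕ :=
  (Finset.univ.filter (fun t => u t = 1)).card

/-- `C` is an `(n,d,w)` constant-weight binary code. -/
def IsCWCode (n d w : ℕ) (C : Finset (Fin n → ZMod 2)) : Prop :=
  (∀ c ∈ C, wtOnes c = w) ∧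
  ∀ u ∈ C, ∀ v ∈ C, u ≠ v → d ≤ hammingDist u v

/-- `A n d w`: the largest possible size of an `(n,d,w)` constant-weight code. -/
noncomputable def A (n d w : ℕ) : ℕ :=
  sSup {M | ∃ C : Finset (Fin n → ZMod 2), IsCWCode n d w C ∧ C.card = M}

/-- `C` is a `(w1,n1,w2,n2,d)` doubly-constant-weight binary code. -/
def IsDCWCode (w1 n1 w2 n2 d : ℕ) (C : Finset (Fin n1 ⊕ Fin n2 → ZMod 2)) : Prop :=
  (∀ c ∈ C,
    (Finset.univ.filter (fun t : Fin n1 => c (Sum.inl t) = 1)).card = w1 ∧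
    (Finset.univ.filter (fun t : Fin n2 => c (Sum.inr t) = 1)).card = w2) ∧
  ∀ u ∈ C, ∀ v ∈ C, u ≠ v → d ≤ hammingDist u v

/-- `T w1 n1 w2 n2 d`: the largest possible size of a `(w1,n1,w2,n2,d)`
doubly-constant-weight code. -/
noncomputable def T (w1 n1 w2 n2 d : ℕ) : ℕ :=
  sSup {M | ∃ C : Finset (Fin n1 ⊕ Fin n2 → ZMod 2), IsDCWCode w1 n1 w2 n2 d C ∧ C.card = M}

/-- `S_i(c)`: the set of codewords of `C` at distance `i` from `c`. -/
def Sdist {n : ℕ} (C : Finset (Fin n → ZMod 2)) (c : Fin n → ZMod 2) (i : ℕ) :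
    Finset (Fin n → ZMod 2) :=
  C.filter (fun u => hammingDist u c = i)

/-- The distance distribution `A_i = (1/|C|) ∑_{c ∈ C} |S_i(c)|` of a code `C`. -/
noncomputable def distDistr {n : ℕ} (C : Finset (Fin n → ZMod 2)) (i : ℕ) : ℚ :=
  (∑ c ∈ C, ((Sdist C c i).card : ℚ)) / (C.card : ℚ)

/-- `V_i`: vectors of `F^n` with exactly `i` ones on the first `w` coordinates and
exactly `i` ones on the last `n - w` coordinates. -/
def Vset (n w i : ℕ) : Finset (Fin n → ZMod 2) :=
  Finset.univ.filter (fun u =>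
    (Finset.univ.filter (fun t : Fin n => t.val < w ∧ u t = 1)).card = i ∧
    (Finset.univ.filter (fun t : Fin n => w ≤ t.val ∧ u t = 1)).card = i)

/-- `m_{i,j} = max { d(u,v) : u ∈ V_i, v ∈ V_j }`. -/
def mMax (n w i j : ℕ) : ℕ :=
  ((Vset n w i) ×ˢ (Vset n w j)).sup fun p => hammingDist p.1 p.2

/-- `P⁻_k(n;x) = ∑_{j odd} C(x,j) C(n-x,k-j)`. -/
def Pminus (k n x : ℕ) : ℕ :=
  ∑ j ∈ Finset.range (k + 1), if Odd j then x.choose j * (n - x).choose (k - j) else 0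

/-- `P⁺_k(n;x) = ∑_{j even} C(x,j) C(n-x,k-j)`. -/
def Pplus (k n x : ℕ) : ℕ :=
  ∑ j ∈ Finset.range (k + 1), if Even j then x.choose j * (n - x).choose (k - j) else 0

/-- The Krawtchouk polynomial `P_k(n;x) = ∑_j (-1)^j C(x,j) C(n-x,k-j)` at integer points. -/
def Kraw (k n x : ℕ) : ℤ :=
  ∑ j ∈ Finset.range (k + 1), (-1 : ℤ) ^ j * x.choose j * (n - x).choose (k - j)

lemma bddAbove_codes (n d w : ℕ) :
    BddAbove {M | ∃ C : Finset (Fin n → ZMod 2), IsCWCode n d w C ∧ C.card = M} := by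
  refine ⟨Fintype.card (Fin n → ZMod 2), ?_⟩
  rintro M ⟨C, _, rfl⟩
  exact Finset.card_le_univ C

lemma card_le_A {n d w : ℕ} {C : Finset (Fin n → ZMod 2)} (h : IsCWCode n d w C) :
    C.card ≤ A n d w :=
  le_csSup (bddAbove_codes n d w) ⟨C, h, rfl⟩

lemma filter_succAbove_card {m : ℕ} (i : Fin (m+1)) (p : Fin (m+1) → Prop)
    [DecidablePred p] (hi : ¬ p i) :
    (Finset.univ.filter (fun j : Fin m => p (i.succAbove j))).card
      = (Finset.univ.filter p).card := by
  apply Finset.card_bij (fun j _ => i.succAbove j)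
  · intro j hj
    simp only [Finset.mem_filter, Finset.mem_univ, true_and] at hj ⊢
    exact hj
  · intro a _ b _ hab
    exact Fin.succAbove_right_injective hab
  · intro k hk
    simp only [Finset.mem_filter, Finset.mem_univ, true_and] at hk
    have hki : k ≠ i := fun h => hi (h ▸ hk)
    obtain ⟨j, hj⟩ := Fin.exists_succAbove_eq hki
    exact ⟨j, by simp [hj, hk], hj⟩

/-- Johnson bound, second form: For all positive integers `n, d, w`
with `w < n`, `A(n,d,w) ≤ ⌊(n/(n-w)) · A(n-1,d,w)⌋`. -/
theorem johnson_second (n d w : ℕ) (hn : 0 < n) (hd : 0 < d) (hw : 0 < w)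
    (hwn : w < n) :
    A n d w ≤ n * A (n - 1) d w / (n - w) := by
  obtain ⟨m, rfl⟩ := Nat.exists_eq_succ_of_ne_zero hn.ne'
  have hm1 : m + 1 - 1 = m := rfl
  rw [hm1]
  have hnw : 0 < m + 1 - w := by omega
  apply csSup_le
  · exact ⟨0, ∅, ⟨by constructor <;> simp, by simp⟩⟩
  rintro M ⟨C, hC, rfl⟩
  rw [Nat.le_div_iff_mul_le hnw]
  -- shortened codes
  have key : ∀ i : Fin (m+1), (C.filter (fun c => c i = 0)).card ≤ A m d w := by
    intro i
    set Ci := C.filter (fun c => c i = 0) with hCi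
    set f : (Fin (m+1) → ZMod 2) → (Fin m → ZMod 2) :=
      fun c => fun j => c (i.succAbove j) with hf
    have hzero : ∀ c ∈ Ci, c i = 0 := by
      intro c hc; exact (Finset.mem_filter.mp hc).2
    have hmem : ∀ c ∈ Ci, c ∈ C := fun c hc => (Finset.mem_filter.mp hc).1
    have hinj : Set.InjOn f Ci := by
      intro u hu v hv huv
      funext k
      by_cases hk : k = i
      · rw [hk, hzero u hu, hzero v hv]
      · obtain ⟨j, hj⟩ := Fin.exists_succAbove_eq hk
        rw [← hj]
        exact congrFun huv j
    have hcode : IsCWCode m d w (Ci.image f) := by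
      constructor
      · rintro c hc
        obtain ⟨u, hu, rfl⟩ := Finset.mem_image.mp hc
        have h01 : ¬ (u i = 1) := by rw [hzero u hu]; decide
        unfold wtOnes
        rw [hf]
        rw [filter_succAbove_card i (fun k => u k = 1) h01]
        exact hC.1 u (hmem u hu)
      · rintro x hx y hy hxy
        obtain ⟨u, hu, rfl⟩ := Finset.mem_image.mp hx
        obtain ⟨v, hv, rfl⟩ := Finset.mem_image.mp hy
        have huv : u ≠ v := fun h => hxy (by rw [h])
        have hd' := hC.2 u (hmem u hu) v (hmem v hv) huv
        have heq : hammingDist (f u) (f v) = hammingDist u v := by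
          unfold hammingDist
          have hiagree : ¬ (u i ≠ v i) := by
            rw [hzero u hu, hzero v hv]; simp
          exact filter_succAbove_card i (fun k => u k ≠ v k) hiagree
        omega
    have := card_le_A hcode
    rwa [Finset.card_image_of_injOn hinj] at this
  have hsum : ∑ i : Fin (m+1), (C.filter (fun c => c i = 0)).card
      = C.card * (m + 1 - w) := by
    have : ∀ i : Fin (m+1), (C.filter (fun c => c i = 0)).card
        = ∑ c ∈ C, (if c i = 0 then 1 else 0) := by
      intro i; rw [Finset.card_filter]
    simp only [this]
    rw [Finset.sum_comm]
    rw [Finset.sum_congr rfl (fun c hc => ?_), Finset.sum_const, smul_eq_mul]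
    have hw' : (Finset.univ.filter (fun t : Fin (m+1) => c t = 1)).card = w :=
      hC.1 c hc
    have h01 : ∀ x : ZMod 2, (x = 0) = ¬ (x = 1) := by decide
    have : ∑ i : Fin (m+1), (if c i = 0 then 1 else 0)
        = (Finset.univ.filter (fun i : Fin (m+1) => c i = 0)).card := by
      rw [Finset.card_filter]
    rw [this]
    have hcompl := Finset.card_filter_add_card_filter_not
      (s := (Finset.univ : Finset (Fin (m+1)))) (p := fun i => c i = 1)
    simp only [Finset.card_univ, Fintype.card_fin] at hcompl
    have : (Finset.univ.filter (fun i : Fin (m+1) => c i = 0))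
        = (Finset.univ.filter (fun i : Fin (m+1) => ¬ (c i = 1))) := by
      apply Finset.filter_congr; intro i _; rw [h01]
    rw [this]
    omega
  calc C.card * (m + 1 - w) = ∑ i : Fin (m+1), (C.filter (fun c => c i = 0)).card :=
        hsum.symm
    _ ≤ ∑ _i : Fin (m+1), A m d w := Finset.sum_le_sum (fun i _ => key i)
    _ = (m+1) * A m d w := by rw [Finset.sum_const, Finset.card_univ,
          Fintype.card_fin, smul_eq_mul]
end

section
/- Let C be a nonempty (n,d,w) constant-weight code with d even and d < 2w ≤ n, with distance distribution {A_{2i}}. Then for every integer i with d/2 ≤ i ≤ w, A_{2i} ≤ T(i, w, i, n−w, d). -/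
lemma zmod2_ne_iff {a b : ZMod 2} (hb : b = 1) : (a ≠ b) ↔ ¬ a = 1 := by
  subst hb; rfl

lemma zmod2_ne_iff' {a b : ZMod 2} (hb : ¬ b = 1) : (a ≠ b) ↔ a = 1 := by
  revert a b; decide

lemma zmod2_add_one {a : ZMod 2} : a + 1 = 1 ↔ ¬ a = 1 := by revert a; decide

lemma zmod2_eq_zero {a : ZMod 2} (h : ¬ a = 1) : a = 0 := by revert a; decide

lemma hammingDist_comp_equiv {α β γ : Type*} [Fintype α] [Fintype β] [DecidableEq γ]
    (e : α ≃ β) (g h : β → γ) : hammingDist (g ∘ e) (h ∘ e) = hammingDist g h := by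
  simp only [hammingDist, Function.comp]
  apply Finset.card_bij (fun a _ => e a)
  · intro a ha
    simp only [Finset.mem_filter, Finset.mem_univ, true_and] at *
    exact ha
  · intro a _ b _ hab; exact e.injective hab
  · intro b hb
    refine ⟨e.symm b, ?_, by simp⟩
    simp only [Finset.mem_filter, Finset.mem_univ, true_and, Equiv.apply_symm_apply] at *
    exact hb

lemma T_bddAbove (w1 n1 w2 n2 d : ℕ) :
    BddAbove {M | ∃ C : Finset (Fin n1 ⊕ Fin n2 → ZMod 2), IsDCWCode w1 n1 w2 n2 d C ∧ C.card = M} := by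
  refine ⟨Fintype.card (Fin n1 ⊕ Fin n2 → ZMod 2), ?_⟩
  rintro M ⟨C, _, rfl⟩
  exact Finset.card_le_univ C

/-- Key lemma: |S_{2i}(c)| ≤ T(i,w,i,n-w,d). -/
lemma Sdist_card_le_T (n d w i : ℕ) (C : Finset (Fin n → ZMod 2))
    (hcode : IsCWCode n d w C) {c : Fin n → ZMod 2} (hc : c ∈ C) (hwn : w ≤ n) :
    ((Sdist C c (2 * i)).card) ≤ T i w i (n - w) d := by
  classical
  have hs : (Finset.univ.filter (fun t => c t = 1)).card = w := hcode.1 c hc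
  have hcard1 : Fintype.card {t : Fin n // c t = 1} = w := by
    rw [Fintype.card_subtype]; exact hs
  have hcard2 : Fintype.card {t : Fin n // ¬ c t = 1} = n - w := by
    rw [Fintype.card_subtype]
    have h := Finset.card_filter_add_card_filter_not
      (s := (Finset.univ : Finset (Fin n))) (p := fun t => c t = 1)
    simp only [Finset.card_univ, Fintype.card_fin] at h
    omega
  set e1 := Fintype.equivFinOfCardEq hcard1 with he1
  set e2 := Fintype.equivFinOfCardEq hcard2 with he2
  set e : Fin n ≃ Fin w ⊕ Fin (n - w) :=
    (Equiv.sumCompl (fun t => c t = 1)).symm.trans (Equiv.sumCongr e1 e2) with he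
  have he_inl : ∀ x : Fin w, c (e.symm (Sum.inl x)) = 1 := by
    intro x
    simp only [he, Equiv.symm_trans_apply, Equiv.sumCongr_symm, Equiv.sumCongr_apply,
      Sum.map_inl, Equiv.symm_symm, Equiv.sumCompl_apply_inl]
    exact (e1.symm x).2
  have he_inr : ∀ y : Fin (n - w), ¬ c (e.symm (Sum.inr y)) = 1 := by
    intro y
    simp only [he, Equiv.symm_trans_apply, Equiv.sumCongr_symm, Equiv.sumCongr_apply,
      Sum.map_inr, Equiv.symm_symm, Equiv.sumCompl_apply_inr]
    exact (e2.symm y).2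
  -- the map
  set Φ : (Fin n → ZMod 2) → (Fin w ⊕ Fin (n - w) → ZMod 2) :=
    fun u x => u (e.symm x) + c (e.symm x) with hΦ
  have hΦinj : Function.Injective Φ := by
    intro u v huv
    funext t
    have := congrFun huv (e t)
    simpa using add_right_cancel this
  have hΦdist : ∀ u v : Fin n → ZMod 2, hammingDist (Φ u) (Φ v) = hammingDist u v := by
    intro u v
    have h1 : hammingDist (Φ u ∘ e) (Φ v ∘ e) = hammingDist (Φ u) (Φ v) :=
      hammingDist_comp_equiv e _ _
    rw [← h1]
    unfold hammingDist
    congr 1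
    apply Finset.filter_congr
    intro t _
    simp only [hΦ, Function.comp_apply, Equiv.symm_apply_apply]
    constructor
    · intro h h'; exact h (by rw [h'])
    · intro h h'; exact h (add_right_cancel h')
  -- weight counts for u ∈ S
  set S := Sdist C c (2 * i) with hS
  have hweights : ∀ u ∈ S,
      (Finset.univ.filter (fun t : Fin n => c t = 1 ∧ ¬ u t = 1)).card = i ∧
      (Finset.univ.filter (fun t : Fin n => ¬ c t = 1 ∧ u t = 1)).card = i := by
    intro u hu
    rw [hS, Sdist, Finset.mem_filter] at hu
    obtain ⟨huC, hdist⟩ := hu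
    have hwu : (Finset.univ.filter (fun t => u t = 1)).card = w := hcode.1 u huC
    have hdd : (Finset.univ.filter (fun t : Fin n => u t ≠ c t)).card = 2 * i := hdist
    -- split by c t = 1
    have split : ∀ (p : Fin n → Prop) [DecidablePred p],
        (Finset.univ.filter (fun t => c t = 1 ∧ p t)).card +
        (Finset.univ.filter (fun t => ¬ c t = 1 ∧ p t)).card =
        (Finset.univ.filter p).card := by
      intro p _
      have h := Finset.card_filter_add_card_filter_not
        (s := Finset.univ.filter p) (p := fun t => c t = 1)
      rw [Finset.filter_filter, Finset.filter_filter] at h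
      rw [← h]
      congr 1 <;> · congr 1; ext t; simp [and_comm]
    have h1 := split (fun t => u t ≠ c t)
    have h2 := split (fun t => u t = 1)
    -- on c t = 1 side, u t ≠ c t ↔ ¬ u t = 1
    have e1' : (Finset.univ.filter (fun t : Fin n => c t = 1 ∧ u t ≠ c t)) =
        (Finset.univ.filter (fun t : Fin n => c t = 1 ∧ ¬ u t = 1)) := by
      apply Finset.filter_congr; intro t _
      constructor
      · rintro ⟨h, h'⟩; exact ⟨h, (zmod2_ne_iff h).mp h'⟩
      · rintro ⟨h, h'⟩; exact ⟨h, (zmod2_ne_iff h).mpr h'⟩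
    have e2' : (Finset.univ.filter (fun t : Fin n => ¬ c t = 1 ∧ u t ≠ c t)) =
        (Finset.univ.filter (fun t : Fin n => ¬ c t = 1 ∧ u t = 1)) := by
      apply Finset.filter_congr; intro t _
      constructor
      · rintro ⟨h, h'⟩; exact ⟨h, (zmod2_ne_iff' h).mp h'⟩
      · rintro ⟨h, h'⟩; exact ⟨h, (zmod2_ne_iff' h).mpr h'⟩
    rw [e1', e2', hdd] at h1
    rw [hwu] at h2
    -- also card of (c t = 1 ∧ u t = 1) + (c t = 1 ∧ ¬ u t = 1) = w
    have h3 : (Finset.univ.filter (fun t : Fin n => c t = 1 ∧ u t = 1)).card +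
        (Finset.univ.filter (fun t : Fin n => c t = 1 ∧ ¬ u t = 1)).card = w := by
      have h := Finset.card_filter_add_card_filter_not
        (s := Finset.univ.filter (fun t : Fin n => c t = 1)) (p := fun t => u t = 1)
      rw [Finset.filter_filter, Finset.filter_filter, hs] at h
      convert h using 3
    omega
  -- the image code
  set D := S.image Φ with hD
  have hDcard : D.card = S.card := Finset.card_image_of_injective S hΦinj
  have hDcode : IsDCWCode i w i (n - w) d D := by
    constructor
    · intro x hx
      rw [hD, Finset.mem_image] at hx
      obtain ⟨u, hu, rfl⟩ := hx
      obtain ⟨hw1, hw2⟩ := hweights u hu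
      constructor
      · rw [← hw1]
        apply Finset.card_bij (fun x _ => e.symm (Sum.inl x))
        · intro x hx
          simp only [Finset.mem_filter, Finset.mem_univ, true_and, hΦ] at *
          refine ⟨he_inl x, ?_⟩
          rw [he_inl x] at hx
          exact zmod2_add_one.mp hx
        · intro a _ b _ hab
          have := e.symm.injective hab
          simpa using this
        · intro t ht
          simp only [Finset.mem_filter, Finset.mem_univ, true_and] at ht
          obtain ⟨hct, hut⟩ := ht
          refine ⟨(e1 ⟨t, hct⟩), Finset.mem_filter.mpr ⟨Finset.mem_univ _, ?_⟩, ?_⟩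
          · have het : e.symm (Sum.inl (e1 ⟨t, hct⟩)) = t := by
              simp [he, Equiv.symm_trans_apply]
            simp only [hΦ, het, hct]
            rw [zmod2_add_one]; exact hut
          · simp [he, Equiv.symm_trans_apply]
      · rw [← hw2]
        apply Finset.card_bij (fun y _ => e.symm (Sum.inr y))
        · intro y hy
          simp only [Finset.mem_filter, Finset.mem_univ, true_and, hΦ] at *
          refine ⟨he_inr y, ?_⟩
          have h0 : c (e.symm (Sum.inr y)) = 0 := zmod2_eq_zero (he_inr y)
          rw [h0] at hy; simpa using hy
        · intro a _ b _ hab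
          have := e.symm.injective hab
          simpa using this
        · intro t ht
          simp only [Finset.mem_filter, Finset.mem_univ, true_and] at ht
          obtain ⟨hct, hut⟩ := ht
          refine ⟨(e2 ⟨t, hct⟩), Finset.mem_filter.mpr ⟨Finset.mem_univ _, ?_⟩, ?_⟩
          · have het : e.symm (Sum.inr (e2 ⟨t, hct⟩)) = t := by
              simp [he, Equiv.symm_trans_apply]
            have h0 : c t = 0 := zmod2_eq_zero hct
            simp only [hΦ, het, h0, add_zero]
            exact hut
          · simp [he, Equiv.symm_trans_apply]
    · intro x hx y hy hxy
      rw [hD, Finset.mem_image] at hx hy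
      obtain ⟨u, hu, rfl⟩ := hx
      obtain ⟨v, hv, rfl⟩ := hy
      have huv : u ≠ v := fun h => hxy (by rw [h])
      rw [hΦdist]
      have huC : u ∈ C := Finset.mem_filter.mp hu |>.1
      have hvC : v ∈ C := Finset.mem_filter.mp hv |>.1
      exact hcode.2 u huC v hvC huv
  have hmem : S.card ∈ {M | ∃ C' : Finset (Fin w ⊕ Fin (n - w) → ZMod 2),
      IsDCWCode i w i (n - w) d C' ∧ C'.card = M} := ⟨D, hDcode, hDcard⟩
  exact le_csSup (T_bddAbove i w i (n - w) d) hmem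

/-- For a nonempty `(n,d,w)` constant-weight code `C` with `d` even and
`d < 2w ≤ n` and distance distribution `{A_{2i}}`, every `d/2 ≤ i ≤ w` satisfies
`A_{2i} ≤ T(i,w,i,n-w,d)`. -/
theorem distDistr_le_T (n d w i : ℕ) (C : Finset (Fin n → ZMod 2)) (hC : C.Nonempty)
    (hcode : IsCWCode n d w C) (hd : Even d) (hdw : d < 2 * w) (hwn : 2 * w ≤ n)
    (hi : d / 2 ≤ i) (hi' : i ≤ w) :
    distDistr C (2 * i) ≤ (T i w i (n - w) d : ℚ) := by
  have hw_le : w ≤ n := by omega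
  have hcpos : (0 : ℚ) < (C.card : ℚ) := by
    exact_mod_cast Finset.card_pos.mpr hC
  rw [distDistr, div_le_iff₀ hcpos]
  calc ∑ c ∈ C, ((Sdist C c (2 * i)).card : ℚ)
      ≤ ∑ _c ∈ C, (T i w i (n - w) d : ℚ) := by
        apply Finset.sum_le_sum
        intro c hc
        exact_mod_cast Sdist_card_le_T n d w i C hcode hc hw_le
    _ = (T i w i (n - w) d : ℚ) * (C.card : ℚ) := by
        rw [Finset.sum_const, nsmul_eq_mul, mul_comm]
end
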